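/- (Paper's Theorem: the worst-case scenario is extreme.) Let n ≥ 1 and let x be a schedule. Then for every scenario r ∈ R one has Q(x,r) ≤ max over jobs j of Q(x, r̄^j); consequently the supremum defining Z(x) is attained at an extreme scenario, i.e. Z(x) = max over j ∈ {1,…,n} of Q(x, r̄^j). -/

import Mathlib

open Finset

/-- A schedule assigns to each machine a finite sequence of jobs such that
every job occurs exactly once among all the sequences. -/
structure Schedule (m n : ℕ) where
  seq : Fin m → List (Fin n)
  valid : ∀ j : Fin n, (∑ i : Fin m, (seq i).count j) = 1

variable {m n : ℕ}

/-- Completion time after processing the list `L` of jobs on a machine with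
processing times `q` and release dates `r`; recursively `C₀ = 0`,
`C_k = q j_k + max C_{k-1} (r j_k)`. -/
def mComp (q r : Fin n → ℝ) (L : List (Fin n)) : ℝ :=
  L.foldl (fun c j => q j + max c (r j)) 0

/-- Makespan of the schedule `x` under the release dates `r`. -/
noncomputable def Cmax (p : Fin m → Fin n → ℝ) (x : Schedule m n) (r : Fin n → ℝ) : ℝ :=
  ⨆ i : Fin m, mComp (p i) r (x.seq i)

/-- Optimal makespan `C*(r)`: the minimum of `Cmax` over all schedules. -/
noncomputable def Cstar (p : Fin m → Fin n → ℝ) (r : Fin n → ℝ) : ℝ :=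
  ⨅ x : Schedule m n, Cmax p x r

/-- Regret of schedule `x` under scenario `r`. -/
noncomputable def regret (p : Fin m → Fin n → ℝ) (x : Schedule m n) (r : Fin n → ℝ) : ℝ :=
  Cmax p x r - Cstar p r

/-- The scenario box determined by the interval bounds. -/
def box (rlo rhi : Fin n → ℝ) : Set (Fin n → ℝ) :=
  {r | ∀ j, rlo j ≤ r j ∧ r j ≤ rhi j}

/-- Worst-case regret `Z(x)`. -/
noncomputable def Zreg (p : Fin m → Fin n → ℝ) (x : Schedule m n) (rlo rhi : Fin n → ℝ) : ℝ :=
  sSup ((fun r => regret p x r) '' box rlo rhi)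

/-- Extreme scenario `r̄^j`. -/
def extSc (rlo rhi : Fin n → ℝ) (j : Fin n) : Fin n → ℝ :=
  Function.update rlo j (rhi j)

/-- The set `H(x)` of jobs whose release interval is covered by the
processing of their predecessors (positions are 0-indexed: job at position
`k ≥ 1` has predecessors `(x.seq i).take k`). -/
def Hset (p : Fin m → Fin n → ℝ) (rlo rhi : Fin n → ℝ) (x : Schedule m n) : Set (Fin n) :=
  {j | ∃ i : Fin m, ∃ k : ℕ, 1 ≤ k ∧ (x.seq i)[k]? = some j ∧
    rhi j ≤ mComp (p i) rlo ((x.seq i).take k)}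

/-- Lower bound `LB₁(r) = max_j (r j + min_i p i j)`. -/
noncomputable def LB1 (p : Fin m → Fin n → ℝ) (r : Fin n → ℝ) : ℝ :=
  ⨆ j : Fin n, (r j + ⨅ i : Fin m, p i j)

/-- Lower bound `LB(r) = min_j r j + m⁻¹ ∑_j min_i p i j`. -/
noncomputable def LB0 (p : Fin m → Fin n → ℝ) (r : Fin n → ℝ) : ℝ :=
  (⨅ j : Fin n, r j) + (m : ℝ)⁻¹ * ∑ j : Fin n, ⨅ i : Fin m, p i j

/-- `E_j(r)`: the jobs unavailable before `j`. -/
noncomputable def Ej (r : Fin n → ℝ) (j : Fin n) : Finset (Fin n) :=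
  Finset.univ.filter fun t => r j ≤ r t

lemma Ej_nonempty (r : Fin n → ℝ) (j : Fin n) : (Ej r j).Nonempty :=
  ⟨j, by simp [Ej]⟩

/-- `W_j(E_j(r), p)` from the paper. -/
noncomputable def W2 (p : Fin m → Fin n → ℝ) (r : Fin n → ℝ) (j : Fin n) : ℝ :=
  (Ej r j).inf' (Ej_nonempty r j) r + (m : ℝ)⁻¹ * ∑ t ∈ Ej r j, ⨅ i : Fin m, p i t

/-- Lower bound `LB₂(r)`. -/
noncomputable def LB2 (p : Fin m → Fin n → ℝ) (r : Fin n → ℝ) : ℝ :=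
  ⨆ j : Fin n, W2 p r j

/-- `W̃_j(E_j(r), p_w)` from the paper, with `λ_j = ⌈|E_j(r)|/m⌉`. -/
noncomputable def W3 (p : Fin m → Fin n → ℝ) (r : Fin n → ℝ) (j : Fin n) : ℝ :=
  (Ej r j).inf' (Ej_nonempty r j) r +
    (⌈((Ej r j).card : ℝ) / (m : ℝ)⌉ : ℝ) *
      (Ej r j).inf' (Ej_nonempty r j) (fun t => ⨅ i : Fin m, p i t)

/-- Lower bound `LB₃(r)`. -/
noncomputable def LB3 (p : Fin m → Fin n → ℝ) (r : Fin n → ℝ) : ℝ :=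
  ⨆ j : Fin n, W3 p r j

/-- The combined lower bound `LB(r̄) = max {LB₁, LB₂, LB₃}`. -/
noncomputable def LBall (p : Fin m → Fin n → ℝ) (r : Fin n → ℝ) : ℝ :=
  max (LB1 p r) (max (LB2 p r) (LB3 p r))

/-!
Fix a scenario `r` and a machine `i` realising the makespan of `x`. Its last idle period ends at
the release date of some job `j`, after which `i` processes `j` and its successors without a break,
so `C_max(x, r) = r_j + (processing time from j on)`. Passing to `r̄^j` raises `r_j` by
`δ = r⁺_j - r_j`, which delays that block, hence `C_max(x, ·)`, by at least `δ`. On the other hand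
`r̄^j ≤ r + δ` pointwise, and shifting all release dates by `δ` delays every schedule by at most `δ`,
so `C*` grows by at most `δ`. Hence `Q(x, r) ≤ Q(x, r̄^j)`.
-/

/-- Completion time of the list `L` on a machine that becomes available at time `c`. -/
def mCompFrom (q r : Fin n → ℝ) (c : ℝ) (L : List (Fin n)) : ℝ :=
  L.foldl (fun c j => q j + max c (r j)) c

section Machine

variable (q : Fin n → ℝ)

@[simp]
lemma mCompFrom_nil (r : Fin n → ℝ) (c : ℝ) : mCompFrom q r c [] = c := rfl

@[simp]
lemma mCompFrom_cons (r : Fin n → ℝ) (c : ℝ) (j : Fin n) (L : List (Fin n)) :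
    mCompFrom q r c (j :: L) = mCompFrom q r (q j + max c (r j)) L := rfl

lemma mCompFrom_append (r : Fin n → ℝ) (c : ℝ) (A B : List (Fin n)) :
    mCompFrom q r c (A ++ B) = mCompFrom q r (mCompFrom q r c A) B :=
  List.foldl_append

lemma mComp_eq_mCompFrom (r : Fin n → ℝ) (L : List (Fin n)) : mComp q r L = mCompFrom q r 0 L :=
  rfl

lemma mCompFrom_mono {r r' : Fin n → ℝ} (hr : ∀ j, r j ≤ r' j) {c c' : ℝ} (hc : c ≤ c')
    (L : List (Fin n)) : mCompFrom q r c L ≤ mCompFrom q r' c' L := by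
  induction L generalizing c c' with
  | nil => exact hc
  | cons j L ih => exact ih (add_le_add_right (max_le_max hc (hr j)) _)

lemma mCompFrom_add_const (r : Fin n → ℝ) (c δ : ℝ) (L : List (Fin n)) :
    mCompFrom q (fun t => r t + δ) (c + δ) L = mCompFrom q r c L + δ := by
  induction L generalizing c with
  | nil => rfl
  | cons j L ih =>
    rw [mCompFrom_cons, mCompFrom_cons, max_add_add_right, ← add_assoc, ih]

lemma add_sum_le_mCompFrom (r : Fin n → ℝ) (c : ℝ) (L : List (Fin n)) :
    c + (L.map q).sum ≤ mCompFrom q r c L := by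
  induction L generalizing c with
  | nil => simp
  | cons j L ih =>
    calc c + ((j :: L).map q).sum = (q j + c) + (L.map q).sum := by simp; ring
      _ ≤ (q j + max c (r j)) + (L.map q).sum := by gcongr; exact le_max_left _ _
      _ ≤ _ := ih _

lemma mComp_nonneg (hq : ∀ j, 0 ≤ q j) (r : Fin n → ℝ) (L : List (Fin n)) :
    0 ≤ mComp q r L := by
  have hsum : 0 ≤ (L.map q).sum := List.sum_nonneg fun _ hx => by
    obtain ⟨j, -, rfl⟩ := List.mem_map.mp hx
    exact hq j
  linarith [add_sum_le_mCompFrom q r 0 L, mComp_eq_mCompFrom q r L]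

lemma mComp_le_add_of_le_add {r r' : Fin n → ℝ} {δ : ℝ} (hδ : 0 ≤ δ) (h : ∀ t, r' t ≤ r t + δ)
    (L : List (Fin n)) : mComp q r' L ≤ mComp q r L + δ :=
  calc mComp q r' L ≤ mCompFrom q (fun t => r t + δ) (0 + δ) L :=
        mCompFrom_mono q h (by simpa using hδ) L
    _ = mComp q r L + δ := mCompFrom_add_const q r 0 δ L

lemma release_add_sum_le_mComp (r : Fin n → ℝ) (A B : List (Fin n)) (j : Fin n) :
    r j + q j + (B.map q).sum ≤ mComp q r (A ++ j :: B) := by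
  rw [mComp_eq_mCompFrom, mCompFrom_append, mCompFrom_cons]
  refine le_trans ?_ (add_sum_le_mCompFrom q r _ B)
  linarith [le_max_right (mCompFrom q r 0 A) (r j)]

/-- The critical job `j`: the machine is busy without interruption from its release date on. -/
lemma exists_critical_job (r : Fin n → ℝ) (hr : ∀ j, 0 ≤ r j) {L : List (Fin n)} (hL : L ≠ []) :
    ∃ A j B, L = A ++ j :: B ∧ mComp q r L = r j + q j + (B.map q).sum := by
  induction L using List.reverseRecOn with
  | nil => exact absurd rfl hL
  | append_singleton L a ih =>
    have hsnoc : mComp q r (L ++ [a]) = q a + max (mComp q r L) (r a) := by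
      simp [mComp_eq_mCompFrom, mCompFrom_append]
    rcases le_or_gt (mComp q r L) (r a) with hidle | hbusy
    · exact ⟨L, a, [], rfl, by rw [hsnoc, max_eq_right hidle]; simp; ring⟩
    · have hL : L ≠ [] := by
        rintro rfl
        exact (hr a).not_gt hbusy
      obtain ⟨A, j, B, rfl, hcrit⟩ := ih hL
      refine ⟨A, j, B ++ [a], by simp, ?_⟩
      rw [hsnoc, max_eq_left hbusy.le, hcrit]
      simp
      ring

end Machine

section Regret

variable {p : Fin m → Fin n → ℝ}

lemma mComp_le_Cmax (x : Schedule m n) (r : Fin n → ℝ) (i : Fin m) :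
    mComp (p i) r (x.seq i) ≤ Cmax p x r :=
  le_ciSup (Finite.bddAbove_range fun i => mComp (p i) r (x.seq i)) i

lemma Cmax_nonneg (hp : ∀ i j, 0 ≤ p i j) (x : Schedule m n) (r : Fin n → ℝ) :
    0 ≤ Cmax p x r :=
  Real.iSup_nonneg fun i => mComp_nonneg (p i) (hp i) r (x.seq i)

lemma Cstar_nonneg (hp : ∀ i j, 0 ≤ p i j) (r : Fin n → ℝ) : 0 ≤ Cstar p r :=
  Real.iInf_nonneg fun x => Cmax_nonneg hp x r

lemma Cstar_le_Cmax (hp : ∀ i j, 0 ≤ p i j) (x : Schedule m n) (r : Fin n → ℝ) :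
    Cstar p r ≤ Cmax p x r :=
  ciInf_le ⟨0, by rintro _ ⟨y, rfl⟩; exact Cmax_nonneg hp y r⟩ x

lemma regret_nonneg (hp : ∀ i j, 0 ≤ p i j) (x : Schedule m n) (r : Fin n → ℝ) :
    0 ≤ regret p x r :=
  sub_nonneg.mpr (Cstar_le_Cmax hp x r)

lemma Cmax_le_add_of_le_add (hp : ∀ i j, 0 ≤ p i j) {r r' : Fin n → ℝ} {δ : ℝ} (hδ : 0 ≤ δ)
    (h : ∀ t, r' t ≤ r t + δ) (x : Schedule m n) : Cmax p x r' ≤ Cmax p x r + δ :=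
  Real.iSup_le (fun i => (mComp_le_add_of_le_add (p i) hδ h _).trans
      (by linarith [mComp_le_Cmax (p := p) x r i]))
    (add_nonneg (Cmax_nonneg hp x r) hδ)

lemma Cstar_le_add_of_le_add [Nonempty (Schedule m n)] (hp : ∀ i j, 0 ≤ p i j)
    {r r' : Fin n → ℝ} {δ : ℝ} (hδ : 0 ≤ δ) (h : ∀ t, r' t ≤ r t + δ) :
    Cstar p r' ≤ Cstar p r + δ := by
  have hbound : ∀ y, Cstar p r' - δ ≤ Cmax p y r := fun y => by
    linarith [Cstar_le_Cmax hp y r', Cmax_le_add_of_le_add hp hδ h y]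
  have : Cstar p r' - δ ≤ Cstar p r := le_ciInf hbound
  linarith

lemma regret_le_regret_of_delay (hp : ∀ i j, 0 ≤ p i j) {x : Schedule m n} {r r' : Fin n → ℝ}
    {δ : ℝ} (hδ : 0 ≤ δ) (h : ∀ t, r' t ≤ r t + δ) (hx : Cmax p x r + δ ≤ Cmax p x r') :
    regret p x r ≤ regret p x r' := by
  have : Nonempty (Schedule m n) := ⟨x⟩
  have := Cstar_le_add_of_le_add hp hδ h
  unfold regret
  linarith

end Regret

section Extreme

variable {rlo rhi : Fin n → ℝ}

lemma extSc_self (j : Fin n) : extSc rlo rhi j j = rhi j :=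
  Function.update_self _ _ _

lemma extSc_mem_box (hle : ∀ j, rlo j ≤ rhi j) (j : Fin n) : extSc rlo rhi j ∈ box rlo rhi := by
  intro t
  rcases eq_or_ne t j with rfl | ht
  · simp [extSc_self, hle t]
  · simp [extSc, Function.update_of_ne ht, hle t]

lemma extSc_le_add {r : Fin n → ℝ} (hr : r ∈ box rlo rhi) (j t : Fin n) :
    extSc rlo rhi j t ≤ r t + (rhi j - r j) := by
  rcases eq_or_ne t j with rfl | ht
  · simp [extSc_self]
  · rw [extSc, Function.update_of_ne ht]
    linarith [(hr t).1, (hr j).2]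

end Extreme

lemma exists_regret_le_regret_extSc {p : Fin m → Fin n → ℝ} (hp : ∀ i j, 0 ≤ p i j)
    {rlo rhi : Fin n → ℝ} (hlo : ∀ j, 0 ≤ rlo j) (x : Schedule m n) {r : Fin n → ℝ}
    (hr : r ∈ box rlo rhi) (hpos : 0 < Cmax p x r) :
    ∃ j, regret p x r ≤ regret p x (extSc rlo rhi j) := by
  have : Nonempty (Fin m) := by
    by_contra hm
    rw [not_nonempty_iff] at hm
    simp [Cmax] at hpos
  obtain ⟨i, hmax⟩ := exists_eq_ciSup_of_finite (f := fun i => mComp (p i) r (x.seq i))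
  have hne : x.seq i ≠ [] := by
    intro hnil
    rw [Cmax, ← hmax, hnil] at hpos
    exact hpos.false
  obtain ⟨A, j, B, hAB, hcrit⟩ :=
    exists_critical_job (p i) r (fun t => (hlo t).trans (hr t).1) hne
  refine ⟨j, regret_le_regret_of_delay hp (sub_nonneg.mpr (hr j).2) (extSc_le_add hr j) ?_⟩
  calc Cmax p x r + (rhi j - r j) = extSc rlo rhi j j + p i j + (B.map (p i)).sum := by
        rw [Cmax, ← hmax, hcrit, extSc_self]; ring
    _ ≤ mComp (p i) (extSc rlo rhi j) (x.seq i) := hAB ▸ release_add_sum_le_mComp _ _ _ _ _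
    _ ≤ Cmax p x (extSc rlo rhi j) := mComp_le_Cmax x _ i

theorem worst_case_scenario_extreme_general {m n : ℕ}
    (p : Fin m → Fin n → ℝ) (hp : ∀ i j, 0 < p i j)
    (rlo rhi : Fin n → ℝ) (hlo : ∀ j, 0 ≤ rlo j) (hlt : ∀ j, rlo j < rhi j)
    (x : Schedule m n) :
    (∀ r ∈ box rlo rhi,
        regret p x r ≤ ⨆ j : Fin n, regret p x (extSc rlo rhi j)) ∧
      Zreg p x rlo rhi = ⨆ j : Fin n, regret p x (extSc rlo rhi j) := by
  have hp0 : ∀ i j, 0 ≤ p i j := fun i j => (hp i j).le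
  have hle : ∀ j, rlo j ≤ rhi j := fun j => (hlt j).le
  have hdom : ∀ r ∈ box rlo rhi, regret p x r ≤ ⨆ j, regret p x (extSc rlo rhi j) := by
    intro r hr
    rcases le_or_gt (Cmax p x r) 0 with hzero | hpos
    · exact (sub_nonpos.mpr (hzero.trans (Cstar_nonneg hp0 r))).trans
        (Real.iSup_nonneg fun j => regret_nonneg hp0 x _)
    · obtain ⟨j, hj⟩ := exists_regret_le_regret_extSc hp0 hlo x hr hpos
      exact hj.trans (le_ciSup (Finite.bddAbove_range fun j => regret p x (extSc rlo rhi j)) j)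
  have hlo_mem : rlo ∈ box rlo rhi := fun j => ⟨le_rfl, hle j⟩
  have hbdd : BddAbove ((fun r => regret p x r) '' box rlo rhi) :=
    ⟨_, Set.forall_mem_image.mpr hdom⟩
  refine ⟨hdom, le_antisymm ?_ ?_⟩
  · exact csSup_le ⟨_, Set.mem_image_of_mem _ hlo_mem⟩ (Set.forall_mem_image.mpr hdom)
  · exact Real.iSup_le (fun j => le_csSup hbdd (Set.mem_image_of_mem _ (extSc_mem_box hle j)))
      ((regret_nonneg hp0 x rlo).trans (le_csSup hbdd (Set.mem_image_of_mem _ hlo_mem)))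

/-- Paper's Theorem: the worst-case scenario is extreme:
every scenario's regret is dominated by the regret of some extreme scenario,
and the worst-case regret is attained on the extreme scenarios. -/
theorem worst_case_scenario_extreme {m n : ℕ} (hm : 0 < m) (hn : 1 ≤ n)
    (p : Fin m → Fin n → ℝ) (hp : ∀ i j, 0 < p i j)
    (rlo rhi : Fin n → ℝ) (hlo : ∀ j, 0 ≤ rlo j) (hlt : ∀ j, rlo j < rhi j)
    (x : Schedule m n) :
    (∀ r ∈ box rlo rhi,
        regret p x r ≤ ⨆ j : Fin n, regret p x (extSc rlo rhi j)) ∧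
      Zreg p x rlo rhi = ⨆ j : Fin n, regret p x (extSc rlo rhi j) :=
  worst_case_scenario_extreme_general p hp rlo rhi hlo hlt x
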